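/- arXiv:2504.03054 — 8 statements merged into one kernel-verified Lean document; each statement's English description precedes it below -/
import Mathlib

section
/- Let B be a real 2×2 matrix with entries b11, b12, b21, b22 such that tr B < 0 and det B > 0, let ρ ≥ 0, and suppose η := b21 + (b22 − b11)ρ − b12·ρ² ≠ 0. Set σ = tr B and δ = −det B, and let C be the 2×2 matrix with entries c11 = 1 − ((δ − b12)ρ + b22)ρ/η, c12 = ((δ − b12)ρ + b22)/η, c21 = ρ + (b12·ρ² + b11·ρ − 1)ρ/η, c22 = −(b12·ρ² + b11·ρ − 1)/η. Then det C = −(δ·ρ² + σ·ρ − 1)/η, and in particular det C ≠ 0. -/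
open Matrix

theorem stmt_0 (b11 b12 b21 b22 ρ : ℝ) (hρ : 0 ≤ ρ)
    (B : Matrix (Fin 2) (Fin 2) ℝ) (hB : B = !![b11, b12; b21, b22])
    (hTr : B.trace < 0) (hDet : 0 < B.det)
    (η : ℝ) (hη : η = b21 + (b22 - b11) * ρ - b12 * ρ ^ 2) (hη0 : η ≠ 0)
    (σ δ : ℝ) (hσ : σ = B.trace) (hδ : δ = -B.det)
    (C : Matrix (Fin 2) (Fin 2) ℝ)
    (hC : C = !![1 - ((δ - b12) * ρ + b22) * ρ / η, ((δ - b12) * ρ + b22) / η;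
                 ρ + (b12 * ρ ^ 2 + b11 * ρ - 1) * ρ / η, -(b12 * ρ ^ 2 + b11 * ρ - 1) / η]) :
    C.det = -(δ * ρ ^ 2 + σ * ρ - 1) / η ∧ C.det ≠ 0 := by
  subst hB
  rw [Matrix.trace_fin_two_of] at hTr hσ
  rw [Matrix.det_fin_two_of] at hDet hδ
  have hdet : C.det = -(δ * ρ ^ 2 + σ * ρ - 1) / η := by
    rw [hC, Matrix.det_fin_two_of]
    field_simp
    rw [hη, hσ, hδ]
    ring
  refine ⟨hdet, ?_⟩
  rw [hdet]
  have hσ0 : σ < 0 := by linarith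
  have hδ0 : δ < 0 := by linarith
  have h1 : δ * ρ ^ 2 + σ * ρ - 1 < 0 := by nlinarith [sq_nonneg ρ]
  intro h
  have := div_eq_zero_iff.mp h
  rcases this with h | h
  · linarith
  · exact hη0 h
end

section
/- Let B be a real 2×2 matrix with entries b11, b12, b21, b22 such that tr B < 0 and det B > 0, let ρ ≥ 0, and suppose η := b21 + (b22 − b11)ρ − b12·ρ² ≠ 0. Set σ = tr B and δ = −det B, and let C be the 2×2 matrix with entries c11 = 1 − ((δ − b12)ρ + b22)ρ/η, c12 = ((δ − b12)ρ + b22)/η, c21 = ρ + (b12·ρ² + b11·ρ − 1)ρ/η, c22 = −(b12·ρ² + b11·ρ − 1)/η. Then C is invertible and C·B·C⁻¹ equals the companion matrix A = [[σ, δ], [1, 0]]. -/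
open Matrix

theorem stmt_1 (b11 b12 b21 b22 ρ : ℝ) (hρ : 0 ≤ ρ)
    (B : Matrix (Fin 2) (Fin 2) ℝ) (hB : B = !![b11, b12; b21, b22])
    (hTr : B.trace < 0) (hDet : 0 < B.det)
    (η : ℝ) (hη : η = b21 + (b22 - b11) * ρ - b12 * ρ ^ 2) (hη0 : η ≠ 0)
    (σ δ : ℝ) (hσ : σ = B.trace) (hδ : δ = -B.det)
    (C : Matrix (Fin 2) (Fin 2) ℝ)
    (hC : C = !![1 - ((δ - b12) * ρ + b22) * ρ / η, ((δ - b12) * ρ + b22) / η;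
                 ρ + (b12 * ρ ^ 2 + b11 * ρ - 1) * ρ / η, -(b12 * ρ ^ 2 + b11 * ρ - 1) / η]) :
    IsUnit C ∧ C * B * C⁻¹ = !![σ, δ; 1, 0] := by
  have htr : B.trace = b11 + b22 := by
    subst hB; simp [Matrix.trace_fin_two]
  have hdet : B.det = b11 * b22 - b12 * b21 := by
    subst hB; simp [Matrix.det_fin_two]
  have hσ' : σ = b11 + b22 := by rw [hσ, htr]
  have hδ' : δ = -(b11 * b22 - b12 * b21) := by rw [hδ, hdet]
  have hσneg : σ < 0 := by rw [hσ]; exact hTr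
  have hδneg : δ < 0 := by rw [hδ]; linarith
  have hdetC : C.det = (1 - σ * ρ - δ * ρ ^ 2) / η := by
    subst hC
    rw [Matrix.det_fin_two_of]
    field_simp
    simp only [hσ', hδ', hη]
    ring
  have hpos : 1 - σ * ρ - δ * ρ ^ 2 > 0 := by nlinarith [sq_nonneg ρ]
  have hdC0 : C.det ≠ 0 := by rw [hdetC]; positivity
  have hu : IsUnit C := (Matrix.isUnit_iff_isUnit_det C).mpr (isUnit_iff_ne_zero.mpr hdC0)
  refine ⟨hu, ?_⟩
  have key : C * B = !![σ, δ; 1, 0] * C := by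
    subst hC hB
    ext i j
    fin_cases i <;> fin_cases j <;>
      · simp [Matrix.mul_apply, Fin.sum_univ_two]
        field_simp
        simp only [hσ', hδ', hη]
        ring
  rw [key, Matrix.mul_assoc, Matrix.mul_nonsing_inv _ (isUnit_iff_ne_zero.mpr hdC0),
    Matrix.mul_one]
end

section
/- Let A be a real 2×2 matrix with tr A < 0 and det A > 0 (a Hurwitz matrix). Then for every q ∈ ℝ², the solution exp(t·A)·q of the linear system (ẋ, ẏ) = A·(x, y) tends to the origin as t → +∞. -/
/-!
By Cayley–Hamilton `A * A = τ • A - δ • 1` with `τ = tr A < 0` and `δ = det A > 0`, so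
`x t = exp (t • A) q` and `y t = A x t` solve the damped oscillator `x' = y`, `y' = τ y - δ x`.
Along it the energy `2δ‖x‖² + ‖y‖² + ‖y - τ x‖²`, which is comparable to `‖y‖² + δ‖x‖²`, has
derivative `2τ (‖y‖² + δ‖x‖²)`; hence it decays exponentially, and `x` tends to `0` with it.
-/

open Matrix Filter Topology

lemma le_mul_exp_of_hasDerivAt_le_mul {f f' : ℝ → ℝ} {κ : ℝ} (hf : ∀ t, HasDerivAt f (f' t) t)
    (hf' : ∀ t, f' t ≤ κ * f t) {t : ℝ} (ht : 0 ≤ t) : f t ≤ f 0 * Real.exp (κ * t) := by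
  have hanti : Antitone fun s ↦ Real.exp (-(κ * s)) * f s := by
    refine antitone_of_hasDerivAt_nonpos
      (f' := fun s ↦ Real.exp (-(κ * s)) * (f' s - κ * f s)) (fun s ↦ ?_) (fun s ↦ ?_)
    · exact ((((hasDerivAt_id s).const_mul κ).neg.exp).mul (hf s)).congr_deriv (by simp; ring)
    · exact mul_nonpos_of_nonneg_of_nonpos (Real.exp_pos _).le (sub_nonpos.2 (hf' s))
  have := hanti ht
  simp only [mul_zero, neg_zero, Real.exp_zero, one_mul] at this
  calc f t = Real.exp (-(κ * t)) * f t * Real.exp (κ * t) := by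
        rw [mul_comm (Real.exp _), mul_assoc, ← Real.exp_add, neg_add_cancel, Real.exp_zero,
          mul_one]
    _ ≤ f 0 * Real.exp (κ * t) := by gcongr

section DampedOscillator

variable {E : Type*} [NormedAddCommGroup E] [InnerProductSpace ℝ E]

def dampedEnergy (τ δ : ℝ) (x y : E) : ℝ := 2 * δ * ‖x‖ ^ 2 + ‖y‖ ^ 2 + ‖y - τ • x‖ ^ 2

lemma two_mul_mul_sq_norm_le_dampedEnergy {δ : ℝ} (τ : ℝ) (x y : E) :
    2 * δ * ‖x‖ ^ 2 ≤ dampedEnergy τ δ x y :=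
  le_add_of_le_of_nonneg (le_add_of_nonneg_right (sq_nonneg _)) (sq_nonneg _)

lemma dampedEnergy_le {τ δ : ℝ} (hδ : 0 < δ) (x y : E) :
    dampedEnergy τ δ x y ≤ (3 + 2 * τ ^ 2 / δ) * (‖y‖ ^ 2 + δ * ‖x‖ ^ 2) := by
  have hsub : ‖y - τ • x‖ ^ 2 ≤ 2 * ‖y‖ ^ 2 + 2 * τ ^ 2 * ‖x‖ ^ 2 := by
    have := norm_sub_le y (τ • x)
    rw [norm_smul, Real.norm_eq_abs] at this
    nlinarith [sq_abs τ, norm_nonneg (y - τ • x), sq_nonneg (‖y‖ - |τ| * ‖x‖)]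
  have hτδ : 2 * τ ^ 2 / δ * (δ * ‖x‖ ^ 2) = 2 * τ ^ 2 * ‖x‖ ^ 2 := by field_simp
  calc dampedEnergy τ δ x y
      ≤ 2 * δ * ‖x‖ ^ 2 + ‖y‖ ^ 2 + (2 * ‖y‖ ^ 2 + 2 * τ ^ 2 * ‖x‖ ^ 2) := by
        unfold dampedEnergy; gcongr
    _ ≤ 3 * ‖y‖ ^ 2 + 3 * (δ * ‖x‖ ^ 2) + 2 * τ ^ 2 / δ * ‖y‖ ^ 2
        + 2 * τ ^ 2 / δ * (δ * ‖x‖ ^ 2) := by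
        have : 0 ≤ 2 * τ ^ 2 / δ * ‖y‖ ^ 2 := by positivity
        have : 0 ≤ δ * ‖x‖ ^ 2 := by positivity
        linarith
    _ = (3 + 2 * τ ^ 2 / δ) * (‖y‖ ^ 2 + δ * ‖x‖ ^ 2) := by ring

lemma hasDerivAt_dampedEnergy {τ δ : ℝ} {x y : ℝ → E} {t : ℝ} (hx : HasDerivAt x (y t) t)
    (hy : HasDerivAt y (τ • y t - δ • x t) t) :
    HasDerivAt (fun s ↦ dampedEnergy τ δ (x s) (y s))
      (2 * τ * (‖y t‖ ^ 2 + δ * ‖x t‖ ^ 2)) t := by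
  refine (((hx.norm_sq.const_mul (2 * δ)).add hy.norm_sq).add
    (hy.sub (hx.const_smul τ)).norm_sq).congr_deriv ?_
  simp only [Pi.sub_apply, Pi.smul_apply, inner_sub_left, inner_sub_right, inner_smul_left,
    inner_smul_right, real_inner_comm (x t) (y t), real_inner_self_eq_norm_sq, RCLike.conj_to_real]
  ring

theorem tendsto_zero_of_hasDerivAt_damped {τ δ : ℝ} (hτ : τ < 0) (hδ : 0 < δ) {x y : ℝ → E}
    (hx : ∀ t, HasDerivAt x (y t) t) (hy : ∀ t, HasDerivAt y (τ • y t - δ • x t) t) :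
    Tendsto x atTop (𝓝 0) := by
  set V := fun t ↦ dampedEnergy τ δ (x t) (y t)
  set C := 3 + 2 * τ ^ 2 / δ
  have hC : 0 < C := by positivity
  have hκ : 2 * τ / C < 0 := div_neg_of_neg_of_pos (by linarith) hC
  have hdecay : ∀ t, 0 ≤ t → V t ≤ V 0 * Real.exp (2 * τ / C * t) := by
    refine fun t ↦ le_mul_exp_of_hasDerivAt_le_mul
      (fun t ↦ hasDerivAt_dampedEnergy (hx t) (hy t)) (fun t ↦ ?_)
    calc 2 * τ * (‖y t‖ ^ 2 + δ * ‖x t‖ ^ 2)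
        = 2 * τ / C * (C * (‖y t‖ ^ 2 + δ * ‖x t‖ ^ 2)) := by field_simp
      _ ≤ 2 * τ / C * V t := mul_le_mul_of_nonpos_left (dampedEnergy_le hδ (x t) (y t)) hκ.le
  have hbound : Tendsto (fun t ↦ V 0 * Real.exp (2 * τ / C * t) / (2 * δ)) atTop (𝓝 0) := by
    simpa using ((Real.tendsto_exp_atBot.comp
      (tendsto_id.const_mul_atTop_of_neg hκ)).const_mul (V 0)).div_const (2 * δ)
  have hsq : Tendsto (fun t ↦ ‖x t‖ ^ 2) atTop (𝓝 0) := by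
    refine squeeze_zero' (.of_forall fun t ↦ sq_nonneg _) ?_ hbound
    filter_upwards [eventually_ge_atTop 0] with t ht
    rw [le_div_iff₀' (by positivity)]
    exact (two_mul_mul_sq_norm_le_dampedEnergy τ (x t) (y t)).trans (hdecay t ht)
  rw [tendsto_zero_iff_norm_tendsto_zero]
  simpa [Real.sqrt_sq (norm_nonneg _)] using hsq.sqrt

theorem ContinuousLinearMap.tendsto_exp_smul_apply_zero [CompleteSpace E] {T : E →L[ℝ] E} {τ δ : ℝ} (hτ : τ < 0)
    (hδ : 0 < δ) (hT : T * T = τ • T - δ • 1) (v : E) :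
    Tendsto (fun t : ℝ ↦ NormedSpace.exp (t • T) v) atTop (𝓝 0) := by
  have hx (t : ℝ) : HasDerivAt (fun s : ℝ ↦ NormedSpace.exp (s • T) v)
      (T (NormedSpace.exp (t • T) v)) t := by
    simpa using (hasDerivAt_exp_smul_const' T t).clm_apply (hasDerivAt_const t v)
  refine tendsto_zero_of_hasDerivAt_damped hτ hδ hx fun t ↦ ?_
  refine (T.hasFDerivAt.comp_hasDerivAt t (hx t)).congr_deriv ?_
  simpa using congr($hT (NormedSpace.exp (t • T) v))

end DampedOscillator

theorem Matrix.toEuclideanCLM_exp {ι : Type*} [Fintype ι] [DecidableEq ι] (A : Matrix ι ι ℝ) :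
    toEuclideanCLM (𝕜 := ℝ) (NormedSpace.exp A) = NormedSpace.exp (toEuclideanCLM (𝕜 := ℝ) A) := by
  -- `exp` does not depend on the norm; any algebra norm inducing the product topology will do.
  let : NormedRing (Matrix ι ι ℝ) := Matrix.linftyOpNormedRing
  let : NormedAlgebra ℝ (Matrix ι ι ℝ) := Matrix.linftyOpNormedAlgebra
  exact NormedSpace.map_exp_of_mem_ball (𝕂 := ℝ) toEuclideanCLM
    ((toEuclideanCLM (𝕜 := ℝ) (n := ι)).toAlgEquiv.toLinearMap.continuous_of_finiteDimensional) A
    ((NormedSpace.expSeries_radius_eq_top ℝ (Matrix ι ι ℝ)).symm ▸ edist_lt_top _ _)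

theorem Matrix.tendsto_exp_smul_mulVec_zero {ι : Type*} [Fintype ι] [DecidableEq ι]
    {A : Matrix ι ι ℝ} {τ δ : ℝ} (hτ : τ < 0) (hδ : 0 < δ) (hA : A * A = τ • A - δ • 1)
    (q : ι → ℝ) : Tendsto (fun t : ℝ ↦ NormedSpace.exp (t • A) *ᵥ q) atTop (𝓝 0) := by
  set T := toEuclideanCLM (𝕜 := ℝ) (n := ι)
  have hexp (t : ℝ) : NormedSpace.exp (t • A) *ᵥ q
      = WithLp.ofLp (NormedSpace.exp (t • T A) (WithLp.toLp 2 q)) := by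
    rw [← map_smul, ← toEuclideanCLM_exp]
    simp
  have hTA : T A * T A = τ • T A - δ • 1 := by simpa using congr(T $hA)
  have := ((PiLp.continuous_ofLp 2 _).tendsto 0).comp
    (ContinuousLinearMap.tendsto_exp_smul_apply_zero hτ hδ hTA (WithLp.toLp 2 q))
  simpa [hexp, Function.comp_def] using this

theorem Matrix.mul_self_eq_trace_smul_sub_det_smul_one {R : Type*} [CommRing R] [Nontrivial R]
    (A : Matrix (Fin 2) (Fin 2) R) : A * A = A.trace • A - A.det • 1 := by
  have := A.aeval_self_charpoly
  simp only [charpoly_fin_two, map_add, map_sub, map_mul, map_pow, Polynomial.aeval_X,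
    Polynomial.aeval_C, Algebra.algebraMap_eq_smul_one, smul_one_mul] at this
  rw [← sub_eq_zero, ← this, sq]
  abel

theorem stmt_4 (A : Matrix (Fin 2) (Fin 2) ℝ) (hTr : A.trace < 0) (hDet : 0 < A.det) :
    ∀ q : Fin 2 → ℝ,
      Filter.Tendsto (fun t : ℝ => (NormedSpace.exp (t • A)).mulVec q) Filter.atTop
        (nhds 0) :=
  Matrix.tendsto_exp_smul_mulVec_zero hTr hDet A.mul_self_eq_trace_smul_sub_det_smul_one
end

section
/- Let σ < 0, δ < 0 with σ² + 4δ > 0, let A = [[σ, δ], [1, 0]], and let r₁ = (σ + √(σ² + 4δ))/2. Fix ρ ≥ 0 and let R₁ = {(x, y) ∈ Σ_ρ⁺ \ Σ_ρ : x > r₁·y}. Then for every q ∈ R₁: (i) exp(t·A)·q → (0,0) as t → +∞; and (ii) there exists t¹ < 0 such that exp(t¹·A)·q ∈ Σ_ρ. -/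
/-!
The eigenvalues `r₂ < r₁ < 0` of `A` have eigenvectors `(rᵢ, 1)`, so writing
`q = a (r₁, 1) + b (r₂, 1)` gives `exp (t A) q = a e^{t r₁} (r₁, 1) + b e^{t r₂} (r₂, 1)`, which
tends to `0` as `t → +∞`. The condition `x > r₁ y` says exactly `b < 0`, so as `t → -∞` the second
coordinate `e^{t r₂} (a e^{t (r₁ - r₂)} + b)` becomes negative, and with it `h ≤ y`. Since
`h q > 0`, the intermediate value theorem gives a negative time at which the orbit meets `Σ_ρ`.
-/

open Matrix Filter Topology

namespace Matrix

variable {m : Type*} [Fintype m] [DecidableEq m]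

open scoped Norms.Operator in
theorem exp_mulVec_of_mulVec_eq_smul {M : Matrix m m ℝ} {v : m → ℝ} {r : ℝ}
    (hv : M *ᵥ v = r • v) : NormedSpace.exp M *ᵥ v = Real.exp r • v := by
  have hpow (n : ℕ) : M ^ n *ᵥ v = r ^ n • v := by
    induction n with
    | zero => simp
    | succ n ih => rw [pow_succ, ← mulVec_mulVec, hv, mulVec_smul, ih, smul_smul, pow_succ']
  have hM := (NormedSpace.exp_series_hasSum_exp' (𝕂 := ℝ) M).map (mulVec.addMonoidHomLeft v)
    (continuous_id.matrix_mulVec continuous_const)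
  have hr := (NormedSpace.exp_series_hasSum_exp' (𝕂 := ℝ) r).smul_const v
  rw [← Real.exp_eq_exp_ℝ] at hr
  refine hM.unique (hr.congr_fun fun n => ?_)
  simp [mulVec.addMonoidHomLeft, smul_mulVec, hpow, smul_smul]

theorem exp_smul_mulVec_of_mulVec_eq_smul {M : Matrix m m ℝ} {v : m → ℝ} {r : ℝ}
    (hv : M *ᵥ v = r • v) (t : ℝ) : NormedSpace.exp (t • M) *ᵥ v = Real.exp (t * r) • v :=
  exp_mulVec_of_mulVec_eq_smul (by rw [smul_mulVec, hv, smul_smul])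

end Matrix

theorem Continuous.exists_neg_eq_zero_of_eventually_neg_atBot {g : ℝ → ℝ} (hg : Continuous g)
    (h0 : 0 < g 0) (hbot : ∀ᶠ t in atBot, g t < 0) : ∃ t < 0, g t = 0 := by
  obtain ⟨t₀, hgt₀, ht₀⟩ := (hbot.and (eventually_lt_atBot 0)).exists
  obtain ⟨t, ⟨-, ht0⟩, hgt⟩ :=
    intermediate_value_Icc ht₀.le hg.continuousOn ⟨hgt₀.le, h0.le⟩
  exact ⟨t, ht0.lt_of_ne (by rintro rfl; linarith), hgt⟩

theorem Real.tendsto_exp_mul_atTop_of_neg {r : ℝ} (hr : r < 0) :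
    Tendsto (fun t => Real.exp (t * r)) atTop (𝓝 0) :=
  Real.tendsto_exp_comp_nhds_zero.mpr (tendsto_id.atTop_mul_const_of_neg hr)

section Companion

variable {σ δ r r₁ r₂ : ℝ}

theorem companion_mulVec_eigenvector (hr : r ^ 2 = σ * r + δ) :
    !![σ, δ; 1, 0] *ᵥ ![r, 1] = r • ![r, 1] := by
  ext i
  fin_cases i
  · simp [mulVec, dotProduct, Fin.sum_univ_two]; linarith
  · simp [mulVec, dotProduct, Fin.sum_univ_two]

noncomputable def modalSolution (r₁ r₂ a b t : ℝ) : Fin 2 → ℝ :=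
  (a * Real.exp (t * r₁)) • ![r₁, 1] + (b * Real.exp (t * r₂)) • ![r₂, 1]

theorem modalSolution_zero_eq_self (hne : r₁ ≠ r₂) (q : Fin 2 → ℝ) :
    modalSolution r₁ r₂ ((q 0 - r₂ * q 1) / (r₁ - r₂)) ((r₁ * q 1 - q 0) / (r₁ - r₂)) 0 = q := by
  have : r₁ - r₂ ≠ 0 := sub_ne_zero.mpr hne
  ext i
  fin_cases i <;> simp [modalSolution] <;> field_simp <;> ring

theorem exp_companion_mulVec_modalSolution (hr₁ : r₁ ^ 2 = σ * r₁ + δ)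
    (hr₂ : r₂ ^ 2 = σ * r₂ + δ) (a b t : ℝ) :
    NormedSpace.exp (t • !![σ, δ; 1, 0]) *ᵥ modalSolution r₁ r₂ a b 0 =
      modalSolution r₁ r₂ a b t := by
  simp only [modalSolution, zero_mul, Real.exp_zero, mul_one, mulVec_add, mulVec_smul,
    exp_smul_mulVec_of_mulVec_eq_smul (companion_mulVec_eigenvector hr₁),
    exp_smul_mulVec_of_mulVec_eq_smul (companion_mulVec_eigenvector hr₂), smul_smul]

theorem exp_companion_mulVec (hr₁ : r₁ ^ 2 = σ * r₁ + δ) (hr₂ : r₂ ^ 2 = σ * r₂ + δ)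
    (hne : r₁ ≠ r₂) (q : Fin 2 → ℝ) (t : ℝ) :
    NormedSpace.exp (t • !![σ, δ; 1, 0]) *ᵥ q =
      modalSolution r₁ r₂ ((q 0 - r₂ * q 1) / (r₁ - r₂)) ((r₁ * q 1 - q 0) / (r₁ - r₂)) t := by
  conv_lhs => rw [← modalSolution_zero_eq_self hne q]
  exact exp_companion_mulVec_modalSolution hr₁ hr₂ _ _ t

theorem continuous_modalSolution (a b : ℝ) : Continuous (modalSolution r₁ r₂ a b) := by
  unfold modalSolution; fun_prop

theorem tendsto_modalSolution_atTop (hr₁ : r₁ < 0) (hr₂ : r₂ < 0) (a b : ℝ) :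
    Tendsto (modalSolution r₁ r₂ a b) atTop (𝓝 0) := by
  have h₁ := ((Real.tendsto_exp_mul_atTop_of_neg hr₁).const_mul a).smul_const ![r₁, 1]
  have h₂ := ((Real.tendsto_exp_mul_atTop_of_neg hr₂).const_mul b).smul_const ![r₂, 1]
  have := h₁.add h₂
  rw [mul_zero, mul_zero, zero_smul, zero_smul, add_zero] at this
  exact this

theorem eventually_modalSolution_one_neg_atBot (hr : r₂ < r₁) (a : ℝ) {b : ℝ} (hb : b < 0) :
    ∀ᶠ t in atBot, modalSolution r₁ r₂ a b t 1 < 0 := by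
  have hlim : Tendsto (fun t => a * Real.exp (t * (r₁ - r₂)) + b) atBot (𝓝 b) := by
    simpa using ((Real.tendsto_exp_atBot.comp
      (tendsto_id.atBot_mul_const (sub_pos.mpr hr))).const_mul a).add_const b
  filter_upwards [hlim.eventually_lt_const hb] with t ht
  have hsplit : modalSolution r₁ r₂ a b t 1 =
      Real.exp (t * r₂) * (a * Real.exp (t * (r₁ - r₂)) + b) := by
    simp [modalSolution, show t * r₁ = t * r₂ + t * (r₁ - r₂) by ring, Real.exp_add]
    ring
  rw [hsplit]
  exact mul_neg_of_pos_of_neg (Real.exp_pos _) ht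

end Companion

theorem ite_nonpos_eq_sub_mul_max (ρ x y : ℝ) :
    (if x ≤ 0 then y else y - ρ * x) = y - ρ * max x 0 := by
  split_ifs with hx
  · simp [max_eq_right hx]
  · rw [max_eq_left (not_le.mp hx).le]

theorem stmt_5 (σ δ ρ : ℝ) (hσ : σ < 0) (hδ : δ < 0) (hdisc : 0 < σ ^ 2 + 4 * δ)
    (hρ : 0 ≤ ρ)
    (A : Matrix (Fin 2) (Fin 2) ℝ) (hA : A = !![σ, δ; 1, 0])
    (r₁ : ℝ) (hr₁ : r₁ = (σ + Real.sqrt (σ ^ 2 + 4 * δ)) / 2)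
    (h : (Fin 2 → ℝ) → ℝ)
    (hh : ∀ p : Fin 2 → ℝ, h p = if p 0 ≤ 0 then p 1 else p 1 - ρ * p 0)
    (Sig SigPlus R₁ : Set (Fin 2 → ℝ))
    (hSig : Sig = {p | h p = 0}) (hSigPlus : SigPlus = {p | 0 ≤ h p})
    (hR₁ : R₁ = {p ∈ SigPlus \ Sig | p 0 > r₁ * p 1}) :
    ∀ q ∈ R₁,
      Filter.Tendsto (fun t : ℝ => (NormedSpace.exp (t • A)).mulVec q) Filter.atTop (nhds 0)
      ∧ ∃ t₁ : ℝ, t₁ < 0 ∧ (NormedSpace.exp (t₁ • A)).mulVec q ∈ Sig := by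
  subst hA hSig hSigPlus hR₁
  rintro q ⟨⟨hq_plus, hq_not_mem⟩, hq_above⟩
  set s := Real.sqrt (σ ^ 2 + 4 * δ)
  have hs : s ^ 2 = σ ^ 2 + 4 * δ := Real.sq_sqrt hdisc.le
  have hs_pos : 0 < s := Real.sqrt_pos.mpr hdisc
  have hs_lt : s < -σ := by nlinarith
  set r₂ := (σ - s) / 2 with hr₂
  have hr₁_root : r₁ ^ 2 = σ * r₁ + δ := by rw [hr₁]; linear_combination hs / 4
  have hr₂_root : r₂ ^ 2 = σ * r₂ + δ := by linear_combination hs / 4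
  have hr₁_neg : r₁ < 0 := by rw [hr₁]; linarith
  have hr₂₁ : r₂ < r₁ := by rw [hr₁, hr₂]; linarith
  have hflow := exp_companion_mulVec hr₁_root hr₂_root hr₂₁.ne' q
  set a := (q 0 - r₂ * q 1) / (r₁ - r₂)
  set b := (r₁ * q 1 - q 0) / (r₁ - r₂)
  have hb : b < 0 := div_neg_of_neg_of_pos (by linarith) (by linarith)
  refine ⟨?_, ?_⟩
  · simpa only [hflow] using tendsto_modalSolution_atTop hr₁_neg (hr₂₁.trans hr₁_neg) a b
  have hh' (p : Fin 2 → ℝ) : h p = p 1 - ρ * max (p 0) 0 :=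
    (hh p).trans (ite_nonpos_eq_sub_mul_max ..)
  have hh_cont : Continuous h := by rw [funext hh']; fun_prop
  have hh_le (p : Fin 2 → ℝ) : h p ≤ p 1 :=
    (hh' p).trans_le (sub_le_self _ (mul_nonneg hρ (le_max_right _ _)))
  have hq_pos : 0 < h (modalSolution r₁ r₂ a b 0) := by
    rw [← hflow 0, zero_smul, NormedSpace.exp_zero, one_mulVec]
    exact hq_plus.lt_of_ne' hq_not_mem
  obtain ⟨t₁, ht₁, hzero⟩ :=
    (hh_cont.comp (continuous_modalSolution a b)).exists_neg_eq_zero_of_eventually_neg_atBot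
      hq_pos ((eventually_modalSolution_one_neg_atBot hr₂₁ a hb).mono
        fun t ht => (hh_le _).trans_lt ht)
  exact ⟨t₁, ht₁, show h _ = 0 by rwa [hflow]⟩
end

section
/- Let σ < 0, δ < 0 with σ² + 4δ > 0, let A = [[σ, δ], [1, 0]], and let r₂ = (σ − √(σ² + 4δ))/2. Fix ρ ≥ 0 and let R₃ = {(x, y) ∈ Σ_ρ⁺ \ Σ_ρ : x < r₂·y}. Then for every q ∈ R₃ there exists t² > 0 such that exp(t²·A)·q ∈ Σ_ρ. -/
/-!
Along the trajectory `p t = exp (t • A) q`, the row vectors `(1, -r₂)` and `(1, -r₁)` are left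
eigenvectors of `A`, so `p 0 - r₂ * p 1 = e^{r₁ t} (q 0 - r₂ * q 1)` and
`p 0 - r₁ * p 1 = e^{r₂ t} (q 0 - r₁ * q 1)`. Subtracting, `(r₁ - r₂) * p 1` is dominated by the
more slowly decaying term `e^{r₁ t} (q 0 - r₂ * q 1)`, which is negative on `R₃`; hence `p 1`, and
with it `h_ρ ∘ p ≤ p 1`, eventually becomes negative. Since `h_ρ q > 0`, the intermediate value
theorem gives a positive time at which the trajectory meets `Σ_ρ`.
-/

open Matrix Filter

theorem Matrix.hasDerivAt_dotProduct_exp_smul_mulVec {n : Type*} [Fintype n] [DecidableEq n]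
    (A : Matrix n n ℝ) (v q : n → ℝ) (t : ℝ) :
    HasDerivAt (fun u : ℝ => v ⬝ᵥ (NormedSpace.exp (u • A) *ᵥ q))
      ((v ᵥ* A) ⬝ᵥ (NormedSpace.exp (t • A) *ᵥ q)) t := by
  open scoped Norms.Operator in
  let L : Matrix n n ℝ →ₗ[ℝ] ℝ :=
    { toFun := fun M => v ⬝ᵥ (M *ᵥ q)
      map_add' := fun M N => by simp [add_mulVec, dotProduct_add]
      map_smul' := fun c M => by simp [smul_mulVec, dotProduct_smul] }
  refine (L.toContinuousLinearMap.hasFDerivAt.comp_hasDerivAt t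
    (hasDerivAt_exp_smul_const' A t)).congr_deriv ?_
  show v ⬝ᵥ ((A * NormedSpace.exp (t • A)) *ᵥ q) = _
  rw [← mulVec_mulVec, dotProduct_mulVec]

theorem Matrix.dotProduct_exp_smul_mulVec_of_vecMul_eq {n : Type*} [Fintype n] [DecidableEq n]
    {A : Matrix n n ℝ} {v : n → ℝ} {μ : ℝ} (hv : v ᵥ* A = μ • v) (q : n → ℝ) (t : ℝ) :
    v ⬝ᵥ (NormedSpace.exp (t • A) *ᵥ q) = Real.exp (μ * t) * (v ⬝ᵥ q) := by
  set F : ℝ → ℝ := fun u => v ⬝ᵥ (NormedSpace.exp (u • A) *ᵥ q)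
  have hG : ∀ u, HasDerivAt (fun u => Real.exp (u * -μ) * F u) 0 u := by
    intro u
    have hF := hasDerivAt_dotProduct_exp_smul_mulVec A v q u
    rw [hv, smul_dotProduct, smul_eq_mul] at hF
    exact ((hasDerivAt_mul_const (-μ)).exp.mul hF).congr_deriv (by ring)
  have hconst := is_const_of_deriv_eq_zero (fun u => (hG u).differentiableAt)
    (fun u => (hG u).deriv) t 0
  simp only [F, zero_mul, Real.exp_zero, one_mul, zero_smul, NormedSpace.exp_zero,
    one_mulVec] at hconst
  rw [← hconst, ← mul_assoc, ← Real.exp_add, show μ * t + t * -μ = 0 by ring, Real.exp_zero,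
    one_mul]

theorem Matrix.continuous_exp_smul_mulVec {n : Type*} [Fintype n] [DecidableEq n]
    (A : Matrix n n ℝ) (q : n → ℝ) :
    Continuous fun t : ℝ => NormedSpace.exp (t • A) *ᵥ q := by
  open scoped Norms.Operator in
  exact (differentiable_exp_smul_const ℝ A).continuous.matrix_mulVec continuous_const

section Companion

variable {σ δ r₁ r₂ : ℝ}

theorem vecMul_companion_of_roots (hsum : r₁ + r₂ = σ) (hprod : r₁ * r₂ = -δ) :
    ![1, -r₂] ᵥ* !![σ, δ; 1, 0] = r₁ • ![1, -r₂] := by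
  rw [← hsum, show δ = -(r₁ * r₂) by linarith]
  simp [vecMul_cons]

theorem eventually_exp_smul_companion_mulVec_one_neg (hsum : r₁ + r₂ = σ)
    (hprod : r₁ * r₂ = -δ) (hlt : r₂ < r₁) {q : Fin 2 → ℝ} (hq : q 0 < r₂ * q 1) :
    ∀ᶠ t : ℝ in atTop, (NormedSpace.exp (t • !![σ, δ; 1, 0]) *ᵥ q) 1 < 0 := by
  set ℓ₁ : ℝ := ![1, -r₂] ⬝ᵥ q
  set ℓ₂ : ℝ := ![1, -r₁] ⬝ᵥ q
  have hℓ₁ : ℓ₁ < 0 := by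
    simp only [ℓ₁, vec2_dotProduct, cons_val_zero, cons_val_one, cons_val_fin_one]
    linarith
  have hsnd : ∀ t : ℝ, (r₁ - r₂) * (NormedSpace.exp (t • !![σ, δ; 1, 0]) *ᵥ q) 1 =
      Real.exp (r₂ * t) * (Real.exp ((r₁ - r₂) * t) * ℓ₁ - ℓ₂) := by
    intro t
    set p := NormedSpace.exp (t • !![σ, δ; 1, 0]) *ᵥ q
    have h₁ : ![1, -r₂] ⬝ᵥ p = Real.exp (r₁ * t) * ℓ₁ :=
      dotProduct_exp_smul_mulVec_of_vecMul_eq (vecMul_companion_of_roots hsum hprod) q t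
    have h₂ : ![1, -r₁] ⬝ᵥ p = Real.exp (r₂ * t) * ℓ₂ :=
      dotProduct_exp_smul_mulVec_of_vecMul_eq
        (vecMul_companion_of_roots (by linarith : r₂ + r₁ = σ) (by linarith : r₂ * r₁ = -δ)) q t
    simp only [vec2_dotProduct, cons_val_zero, cons_val_one, cons_val_fin_one] at h₁ h₂
    rw [mul_sub, ← mul_assoc, ← Real.exp_add, show r₂ * t + (r₁ - r₂) * t = r₁ * t by ring]
    linear_combination h₁ - h₂
  have hlim : Tendsto (fun t => Real.exp ((r₁ - r₂) * t) * ℓ₁ - ℓ₂) atTop atBot :=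
    tendsto_atBot_add_const_right _ _ <| (Real.tendsto_exp_atTop.comp
      (tendsto_id.const_mul_atTop (sub_pos.2 hlt))).atTop_mul_const_of_neg hℓ₁
  filter_upwards [hlim.eventually_lt_atBot 0] with t ht
  refine neg_of_mul_neg_right ?_ (sub_pos.2 hlt).le
  rw [hsnd t]
  exact mul_neg_of_pos_of_neg (Real.exp_pos _) ht

end Companion

/-- The function `h_ρ`: its zero set is the polygonal line `Σ_ρ`. -/
noncomputable def switchingFunction (ρ : ℝ) (p : Fin 2 → ℝ) : ℝ :=
  if p 0 ≤ 0 then p 1 else p 1 - ρ * p 0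

theorem switchingFunction_eq_sub_mul_max (ρ : ℝ) (p : Fin 2 → ℝ) :
    switchingFunction ρ p = p 1 - ρ * max (p 0) 0 := by
  unfold switchingFunction
  split_ifs with hp
  · simp [max_eq_right hp]
  · rw [max_eq_left (not_le.1 hp).le]

theorem continuous_switchingFunction (ρ : ℝ) : Continuous (switchingFunction ρ) := by
  simp only [funext (switchingFunction_eq_sub_mul_max ρ)]
  fun_prop

theorem switchingFunction_le {ρ : ℝ} (hρ : 0 ≤ ρ) (p : Fin 2 → ℝ) :
    switchingFunction ρ p ≤ p 1 := by
  rw [switchingFunction_eq_sub_mul_max]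
  nlinarith [le_max_right (p 0) 0]

theorem stmt_6_general (σ δ ρ : ℝ) (hdisc : 0 < σ ^ 2 + 4 * δ)
    (hρ : 0 ≤ ρ)
    (A : Matrix (Fin 2) (Fin 2) ℝ) (hA : A = !![σ, δ; 1, 0])
    (r₂ : ℝ) (hr₂ : r₂ = (σ - Real.sqrt (σ ^ 2 + 4 * δ)) / 2)
    (h : (Fin 2 → ℝ) → ℝ)
    (hh : ∀ p : Fin 2 → ℝ, h p = if p 0 ≤ 0 then p 1 else p 1 - ρ * p 0)
    (Sig SigPlus R₃ : Set (Fin 2 → ℝ))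
    (hSig : Sig = {p | h p = 0}) (hSigPlus : SigPlus = {p | 0 ≤ h p})
    (hR₃ : R₃ = {p ∈ SigPlus \ Sig | p 0 < r₂ * p 1}) :
    ∀ q ∈ R₃, ∃ t₂ : ℝ, 0 < t₂ ∧ (NormedSpace.exp (t₂ • A)).mulVec q ∈ Sig := by
  obtain rfl : h = switchingFunction ρ := funext hh
  subst hA hr₂ hSig hSigPlus hR₃
  rintro q ⟨⟨hq_nonneg, hq_ne⟩, hq⟩
  set s := Real.sqrt (σ ^ 2 + 4 * δ)
  have hs : 0 < s := Real.sqrt_pos.2 hdisc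
  have hs_sq : s ^ 2 = σ ^ 2 + 4 * δ := Real.sq_sqrt hdisc.le
  have h_neg := eventually_exp_smul_companion_mulVec_one_neg (σ := σ) (δ := δ)
    (r₁ := (σ + s) / 2) (by ring) (by linear_combination -hs_sq / 4) (by linarith) hq
  set g : ℝ → ℝ := fun t => switchingFunction ρ (NormedSpace.exp (t • !![σ, δ; 1, 0]) *ᵥ q)
  have hg : Continuous g :=
    (continuous_switchingFunction ρ).comp (continuous_exp_smul_mulVec _ q)
  have hg_zero : 0 < g 0 := by
    simpa only [g, zero_smul, NormedSpace.exp_zero, one_mulVec] using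
      lt_of_le_of_ne hq_nonneg (Ne.symm hq_ne)
  obtain ⟨T, hT_neg, hT⟩ := (h_neg.and (eventually_gt_atTop 0)).exists
  obtain ⟨t, ht, hgt⟩ := intermediate_value_Ioo' hT.le hg.continuousOn
    ⟨(switchingFunction_le hρ _).trans_lt hT_neg, hg_zero⟩
  exact ⟨t, ht.1, hgt⟩

theorem stmt_6 (σ δ ρ : ℝ) (hσ : σ < 0) (hδ : δ < 0) (hdisc : 0 < σ ^ 2 + 4 * δ)
    (hρ : 0 ≤ ρ)
    (A : Matrix (Fin 2) (Fin 2) ℝ) (hA : A = !![σ, δ; 1, 0])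
    (r₂ : ℝ) (hr₂ : r₂ = (σ - Real.sqrt (σ ^ 2 + 4 * δ)) / 2)
    (h : (Fin 2 → ℝ) → ℝ)
    (hh : ∀ p : Fin 2 → ℝ, h p = if p 0 ≤ 0 then p 1 else p 1 - ρ * p 0)
    (Sig SigPlus R₃ : Set (Fin 2 → ℝ))
    (hSig : Sig = {p | h p = 0}) (hSigPlus : SigPlus = {p | 0 ≤ h p})
    (hR₃ : R₃ = {p ∈ SigPlus \ Sig | p 0 < r₂ * p 1}) :
    ∀ q ∈ R₃, ∃ t₂ : ℝ, 0 < t₂ ∧ (NormedSpace.exp (t₂ • A)).mulVec q ∈ Sig :=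
  stmt_6_general σ δ ρ hdisc hρ A hA r₂ hr₂ h hh Sig SigPlus R₃ hSig hSigPlus hR₃
end

section
/- Let σ < 0, δ < 0 with σ² + 4δ = 0, let A = [[σ, δ], [1, 0]], and let r = σ/2. Fix ρ ≥ 0 and let S₂ = {(x, y) ∈ Σ_ρ⁺ \ Σ_ρ : x < r·y}. Then for every q ∈ S₂ there exists t² > 0 such that exp(t²·A)·q ∈ Σ_ρ. -/
open Matrix Filter

/-
Write A = r • 1 + N with N = A - r • 1, which squares to zero because r is a double eigenvalue.
Hence exp (t • A) = e^{tr} (1 + t • N), and the second coordinate of the trajectory of q is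
e^{tr} (q₁ + t (q₀ - r q₁)). On S₂ the slope q₀ - r q₁ is negative, so this coordinate becomes
nonpositive at some finite time T. Since h p ≤ p₁ for ρ ≥ 0 and h q > 0, the intermediate value
theorem applied to the continuous function t ↦ h (exp (t • A) q) on [0, T] gives a positive
crossing time of Σ_ρ.
-/

theorem NormedSpace.exp_eq_one_add_of_mul_self_eq_zero {𝔸 : Type*} [Ring 𝔸] [Algebra ℚ 𝔸]
    [TopologicalSpace 𝔸] [IsTopologicalRing 𝔸] {x : 𝔸} (hx : x * x = 0) :
    NormedSpace.exp x = 1 + x := by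
  have hpow : ∀ n, 2 ≤ n → x ^ n = 0 := fun n hn => by
    obtain ⟨k, rfl⟩ := Nat.exists_eq_add_of_le hn
    rw [pow_add, sq, hx, zero_mul]
  rw [NormedSpace.exp_eq_tsum_rat]
  dsimp only
  rw [tsum_eq_sum (s := Finset.range 2) fun n hn => by
    rw [hpow n (by simp at hn; omega), smul_zero]]
  simp [Finset.sum_range_succ]

theorem Matrix.exp_smul_one {m : Type*} [Fintype m] [DecidableEq m] (c : ℝ) :
    NormedSpace.exp (c • (1 : Matrix m m ℝ)) = Real.exp c • 1 := by
  rw [smul_one_eq_diagonal, Matrix.exp_diagonal, Pi.exp_def, ← Real.exp_eq_exp_ℝ,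
    ← smul_one_eq_diagonal]

theorem Matrix.exp_smul_smul_one_add_of_mul_self_eq_zero {m : Type*} [Fintype m] [DecidableEq m]
    {N : Matrix m m ℝ} (hN : N * N = 0) (r t : ℝ) :
    NormedSpace.exp (t • (r • 1 + N)) = Real.exp (t * r) • (1 + t • N) := by
  have htN : (t • N) * (t • N) = 0 := by rw [smul_mul_smul_comm, hN, smul_zero]
  rw [smul_add, smul_smul, Matrix.exp_add_of_commute _ _ ((Commute.one_left N).smul_left _
    |>.smul_right t), exp_smul_one, NormedSpace.exp_eq_one_add_of_mul_self_eq_zero htN,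
    smul_mul_assoc, one_mul]

theorem exp_smul_doubleRoot_mulVec (r t : ℝ) (q : Fin 2 → ℝ) :
    NormedSpace.exp (t • !![2 * r, -r ^ 2; 1, 0]) *ᵥ q =
      Real.exp (t * r) • ![(1 + t * r) * q 0 - t * r ^ 2 * q 1, q 1 + t * (q 0 - r * q 1)] := by
  have hA : !![2 * r, -r ^ 2; 1, 0] = r • 1 + !![r, -r ^ 2; 1, -r] := by
    ext i j; fin_cases i <;> fin_cases j <;> simp [two_mul]
  have hN : !![r, -r ^ 2; 1, -r] * !![r, -r ^ 2; 1, -r] = 0 := by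
    ext i j; fin_cases i <;> fin_cases j <;> simp <;> ring
  rw [hA, exp_smul_smul_one_add_of_mul_self_eq_zero hN, smul_mulVec]
  ext i; fin_cases i <;> simp <;> ring

theorem continuous_exp_smul_doubleRoot_mulVec (r : ℝ) (q : Fin 2 → ℝ) :
    Continuous fun t : ℝ => NormedSpace.exp (t • !![2 * r, -r ^ 2; 1, 0]) *ᵥ q := by
  simp only [exp_smul_doubleRoot_mulVec]
  refine continuous_pi fun i => ?_
  fin_cases i <;> simp <;> fun_prop

theorem exists_pos_eq_zero_of_continuous {f : ℝ → ℝ} (hf : Continuous f) (h0 : 0 < f 0)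
    {T : ℝ} (hT : 0 ≤ T) (hfT : f T ≤ 0) : ∃ t, 0 < t ∧ f t = 0 := by
  obtain ⟨t, ht, hft⟩ := intermediate_value_Icc' hT hf.continuousOn ⟨hfT, h0.le⟩
  exact ⟨t, ht.1.lt_of_ne (by rintro rfl; exact h0.ne' hft), hft⟩

theorem stmt_8_general (σ δ ρ : ℝ) (hdisc : σ ^ 2 + 4 * δ = 0)
    (hρ : 0 ≤ ρ)
    (A : Matrix (Fin 2) (Fin 2) ℝ) (hA : A = !![σ, δ; 1, 0])
    (r : ℝ) (hr : r = σ / 2)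
    (h : (Fin 2 → ℝ) → ℝ)
    (hh : ∀ p : Fin 2 → ℝ, h p = if p 0 ≤ 0 then p 1 else p 1 - ρ * p 0)
    (Sig SigPlus S₂ : Set (Fin 2 → ℝ))
    (hSig : Sig = {p | h p = 0}) (hSigPlus : SigPlus = {p | 0 ≤ h p})
    (hS₂ : S₂ = {p ∈ SigPlus \ Sig | p 0 < r * p 1}) :
    ∀ q ∈ S₂, ∃ t₂ : ℝ, 0 < t₂ ∧ (NormedSpace.exp (t₂ • A)).mulVec q ∈ Sig := by
  subst hSig hSigPlus hS₂
  rintro q ⟨⟨hq_nonneg, hq_ne⟩, hq_slope⟩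
  obtain rfl : σ = 2 * r := by linarith
  obtain rfl : δ = -r ^ 2 := by linarith
  subst hA
  have h_eq : h = fun p => p 1 - ρ * max (p 0) 0 := funext fun p => by
    rw [hh]; split_ifs with hp
    · simp [max_eq_right hp]
    · rw [max_eq_left (not_le.mp hp).le]
  -- at this time the affine factor of the second coordinate is q₁ - |q₁|
  have hT : 0 ≤ |q 1| / (r * q 1 - q 0) := div_nonneg (abs_nonneg _) (by linarith)
  refine exists_pos_eq_zero_of_continuous (f := fun t => h (NormedSpace.exp (t • _) *ᵥ q))
    ?_ ?_ hT ?_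
  · have := continuous_exp_smul_doubleRoot_mulVec r q
    rw [h_eq]; fun_prop
  · simpa using lt_of_le_of_ne hq_nonneg (Ne.symm hq_ne)
  · have h_le : ∀ p : Fin 2 → ℝ, h p ≤ p 1 := fun p => by
      rw [h_eq]; nlinarith [le_max_right (p 0) 0]
    refine (h_le _).trans ?_
    rw [exp_smul_doubleRoot_mulVec]
    have h_affine : q 1 + |q 1| / (r * q 1 - q 0) * (q 0 - r * q 1) ≤ 0 := by
      rw [show q 0 - r * q 1 = -(r * q 1 - q 0) by ring, mul_neg, div_mul_cancel₀ _ (by linarith)]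
      linarith [le_abs_self (q 1)]
    simpa using mul_nonpos_of_nonneg_of_nonpos (Real.exp_pos _).le h_affine

theorem stmt_8 (σ δ ρ : ℝ) (hσ : σ < 0) (hδ : δ < 0) (hdisc : σ ^ 2 + 4 * δ = 0)
    (hρ : 0 ≤ ρ)
    (A : Matrix (Fin 2) (Fin 2) ℝ) (hA : A = !![σ, δ; 1, 0])
    (r : ℝ) (hr : r = σ / 2)
    (h : (Fin 2 → ℝ) → ℝ)
    (hh : ∀ p : Fin 2 → ℝ, h p = if p 0 ≤ 0 then p 1 else p 1 - ρ * p 0)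
    (Sig SigPlus S₂ : Set (Fin 2 → ℝ))
    (hSig : Sig = {p | h p = 0}) (hSigPlus : SigPlus = {p | 0 ≤ h p})
    (hS₂ : S₂ = {p ∈ SigPlus \ Sig | p 0 < r * p 1}) :
    ∀ q ∈ S₂, ∃ t₂ : ℝ, 0 < t₂ ∧ (NormedSpace.exp (t₂ • A)).mulVec q ∈ Sig :=
  stmt_8_general σ δ ρ hdisc hρ A hA r hr h hh Sig SigPlus S₂ hSig hSigPlus hS₂
end

section
/- Let λ⁺ < 0, λ⁻ < 0, μ⁺ > 0, μ⁻ > 0 and r > 0. For ρ ≥ 0 define t⁺(ρ) = (1/μ⁺)(arctan(μ⁺ρ/(λ⁺ρ − 1)) + π), t⁻(ρ) = (1/μ⁻)(−arctan(μ⁻ρ/(λ⁻ρ − 1)) + π), Φ⁺(ρ) = (λ⁺ − ((λ⁺)² + (μ⁺)²)ρ)/μ⁺, Φ⁻(ρ) = (λ⁻ − ((λ⁻)² + (μ⁻)²)ρ)/μ⁻, and Q(ρ) = |cos(μ⁻t⁻(ρ)) − Φ⁻(ρ)·sin(μ⁻t⁻(ρ))| / |cos(μ⁺t⁺(ρ))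 + Φ⁺(ρ)·sin(μ⁺t⁺(ρ))|^r. Then as ρ → +∞: if r > 1 then Q(ρ) → 0; if r < 1 then Q(ρ) → +∞; and if r = 1 then Q(ρ) → √(((λ⁻)² + (μ⁻)²) / ((λ⁺)² + (μ⁺)²)). -/
open Real Filter Topology

/-!
Put `θ = arctan (μρ / (λρ - 1))`. Then `μ⁺t⁺ = θ⁺ + π` and `μ⁻t⁻ = π - θ⁻`, so the numerator and
the denominator of `Q` are both of the form `|cos θ + Φ sin θ|`, and since `cos θ = 1 / √(1 + u²)`,
`sin θ = u / √(1 + u²)` for `u = tan θ`, this equals `|(λ + iμ)ρ - 1| = √((λρ - 1)² + (μρ)²)`.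
That grows like `ρ √(λ² + μ²)`, so `Q(ρ)` behaves like
`ρ^(1-r) √((λ⁻)² + (μ⁻)²) / √((λ⁺)² + (μ⁺)²)^r`.
-/

lemma abs_cos_arctan_add_mul_sin_arctan {l μ ρ : ℝ} (hμ : μ ≠ 0) (hρ : l * ρ - 1 ≠ 0) :
    |cos (arctan (μ * ρ / (l * ρ - 1))) +
        (l - (l ^ 2 + μ ^ 2) * ρ) / μ * sin (arctan (μ * ρ / (l * ρ - 1)))| =
      √((l * ρ - 1) ^ 2 + (μ * ρ) ^ 2) := by
  set u := μ * ρ / (l * ρ - 1)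
  have hs : 0 < √(1 + u ^ 2) := sqrt_pos.2 (by positivity)
  have hnum : 1 + (l - (l ^ 2 + μ ^ 2) * ρ) / μ * u = -(l * ρ - 1) * (1 + u ^ 2) := by
    simp only [u]
    field_simp
    ring
  have hsq : (l * ρ - 1) ^ 2 + (μ * ρ) ^ 2 = (l * ρ - 1) ^ 2 * (1 + u ^ 2) := by
    simp only [u]
    field_simp
  rw [cos_arctan, sin_arctan, mul_div_assoc', ← add_div, hnum, hsq, sqrt_mul (sq_nonneg _),
    sqrt_sq_eq_abs, abs_div, abs_mul, abs_neg, abs_of_pos hs,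
    abs_of_pos (by positivity : 0 < 1 + u ^ 2), mul_div_assoc, div_sqrt]

lemma tendsto_sqrt_mul_sub_one_sq_add_sq_div_atTop (l μ : ℝ) :
    Tendsto (fun ρ => √((l * ρ - 1) ^ 2 + (μ * ρ) ^ 2) / ρ) atTop (𝓝 √(l ^ 2 + μ ^ 2)) := by
  have h : Tendsto (fun ρ : ℝ => √((l - ρ⁻¹) ^ 2 + μ ^ 2)) atTop (𝓝 √((l - 0) ^ 2 + μ ^ 2)) :=
    (((tendsto_const_nhds.sub tendsto_inv_atTop_zero).pow 2).add_const _).sqrt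
  rw [sub_zero] at h
  refine h.congr' ?_
  filter_upwards [eventually_gt_atTop 0] with ρ hρ
  have hsq : (l * ρ - 1) ^ 2 + (μ * ρ) ^ 2 = ((l - ρ⁻¹) ^ 2 + μ ^ 2) * ρ ^ 2 := by
    field_simp
  rw [hsq, sqrt_mul (by positivity), sqrt_sq hρ.le, mul_div_cancel_right₀ _ hρ.ne']

lemma eventually_mul_sub_one_ne_zero (l : ℝ) : ∀ᶠ ρ in atTop, l * ρ - 1 ≠ 0 := by
  filter_upwards [eventually_ne_atTop l⁻¹] with ρ hρ
  rcases eq_or_ne l 0 with rfl | hl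
  · norm_num
  · rw [sub_ne_zero]
    exact fun h => hρ (eq_inv_of_mul_eq_one_right h)

section LinearGrowth

variable {f g : ℝ → ℝ} {a b r : ℝ}

lemma div_rpow_eventuallyEq (hg₀ : ∀ ρ, 0 ≤ g ρ) :
    (fun ρ => f ρ / g ρ ^ r) =ᶠ[atTop] fun ρ => (f ρ / ρ) / (g ρ / ρ) ^ r * ρ ^ (1 - r) := by
  filter_upwards [eventually_gt_atTop 0] with ρ hρ
  rw [div_rpow (hg₀ ρ) hρ.le, rpow_sub hρ, rpow_one]
  field_simp

lemma tendsto_div_rpow_nhds_zero_of_one_lt (hg₀ : ∀ ρ, 0 ≤ g ρ)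
    (hf : Tendsto (fun ρ => f ρ / ρ) atTop (𝓝 a)) (hg : Tendsto (fun ρ => g ρ / ρ) atTop (𝓝 b))
    (hb : 0 < b) (hr : 1 < r) :
    Tendsto (fun ρ => f ρ / g ρ ^ r) atTop (𝓝 0) := by
  have hρ : Tendsto (fun ρ : ℝ => ρ ^ (1 - r)) atTop (𝓝 0) := by
    simpa only [neg_sub] using tendsto_rpow_neg_atTop (sub_pos.2 hr)
  have := (hf.div (hg.rpow_const (Or.inl hb.ne')) (rpow_pos_of_pos hb r).ne').mul hρ
  rw [mul_zero] at this
  exact this.congr' (div_rpow_eventuallyEq hg₀).symm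

lemma tendsto_div_rpow_atTop_of_lt_one (hg₀ : ∀ ρ, 0 ≤ g ρ)
    (hf : Tendsto (fun ρ => f ρ / ρ) atTop (𝓝 a)) (hg : Tendsto (fun ρ => g ρ / ρ) atTop (𝓝 b))
    (ha : 0 < a) (hb : 0 < b) (hr : r < 1) :
    Tendsto (fun ρ => f ρ / g ρ ^ r) atTop atTop := by
  have hlim := hf.div (hg.rpow_const (Or.inl hb.ne')) (rpow_pos_of_pos hb r).ne'
  exact (hlim.pos_mul_atTop (div_pos ha (rpow_pos_of_pos hb r)) (tendsto_rpow_atTop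
    (sub_pos.2 hr))).congr' (div_rpow_eventuallyEq hg₀).symm

lemma tendsto_div_of_tendsto_div_id (hf : Tendsto (fun ρ => f ρ / ρ) atTop (𝓝 a))
    (hg : Tendsto (fun ρ => g ρ / ρ) atTop (𝓝 b)) (hb : 0 < b) :
    Tendsto (fun ρ => f ρ / g ρ) atTop (𝓝 (a / b)) := by
  refine (hf.div hg hb.ne').congr' ?_
  filter_upwards [eventually_ne_atTop 0] with ρ hρ
  exact div_div_div_cancel_right₀ hρ _ _

end LinearGrowth

theorem stmt_16_general (lp lm μp μm r : ℝ)
    (hμp : 0 < μp) (hμm : 0 < μm)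
    (tp tm Φp Φm Q : ℝ → ℝ)
    (htp : ∀ ρ, tp ρ = (1 / μp) * (Real.arctan (μp * ρ / (lp * ρ - 1)) + π))
    (htm : ∀ ρ, tm ρ = (1 / μm) * (-Real.arctan (μm * ρ / (lm * ρ - 1)) + π))
    (hΦp : ∀ ρ, Φp ρ = (lp - (lp ^ 2 + μp ^ 2) * ρ) / μp)
    (hΦm : ∀ ρ, Φm ρ = (lm - (lm ^ 2 + μm ^ 2) * ρ) / μm)
    (hQ : ∀ ρ, Q ρ =
      |Real.cos (μm * tm ρ) - Φm ρ * Real.sin (μm * tm ρ)| /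
        |Real.cos (μp * tp ρ) + Φp ρ * Real.sin (μp * tp ρ)| ^ r) :
    (1 < r → Filter.Tendsto Q Filter.atTop (nhds 0)) ∧
    (r < 1 → Filter.Tendsto Q Filter.atTop Filter.atTop) ∧
    (r = 1 → Filter.Tendsto Q Filter.atTop
      (nhds (Real.sqrt ((lm ^ 2 + μm ^ 2) / (lp ^ 2 + μp ^ 2))))) := by
  set N : ℝ → ℝ → ℝ → ℝ := fun l μ ρ => √((l * ρ - 1) ^ 2 + (μ * ρ) ^ 2)
  have hQN : Q =ᶠ[atTop] fun ρ => N lm μm ρ / N lp μp ρ ^ r := by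
    filter_upwards [eventually_mul_sub_one_ne_zero lp, eventually_mul_sub_one_ne_zero lm]
      with ρ hp hm
    have hθp : μp * tp ρ = arctan (μp * ρ / (lp * ρ - 1)) + π := by
      rw [htp]
      field_simp
    have hθm : μm * tm ρ = π - arctan (μm * ρ / (lm * ρ - 1)) := by
      rw [htm]
      field_simp
      ring
    rw [hQ, hθp, hθm, hΦp, hΦm, cos_add_pi, sin_add_pi, cos_pi_sub, sin_pi_sub,
      ← abs_neg, ← abs_neg (_ + _)]
    simp only [N, ← abs_cos_arctan_add_mul_sin_arctan hμp.ne' hp,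
      ← abs_cos_arctan_add_mul_sin_arctan hμm.ne' hm]
    ring_nf
  have hN₀ : ∀ l μ ρ, 0 ≤ N l μ ρ := fun _ _ _ => sqrt_nonneg _
  have hlimp := tendsto_sqrt_mul_sub_one_sq_add_sq_div_atTop lp μp
  have hlimm := tendsto_sqrt_mul_sub_one_sq_add_sq_div_atTop lm μm
  have hbp : 0 < √(lp ^ 2 + μp ^ 2) := sqrt_pos.2 (by positivity)
  have hbm : 0 < √(lm ^ 2 + μm ^ 2) := sqrt_pos.2 (by positivity)
  refine ⟨fun hr1 => ?_, fun hr1 => ?_, fun hr1 => ?_⟩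
  · exact (tendsto_div_rpow_nhds_zero_of_one_lt (hN₀ lp μp) hlimm hlimp hbp hr1).congr' hQN.symm
  · exact (tendsto_div_rpow_atTop_of_lt_one (hN₀ lp μp) hlimm hlimp hbm hbp hr1).congr'
      hQN.symm
  · subst hr1
    simp only [rpow_one] at hQN
    rw [sqrt_div (by positivity)]
    exact (tendsto_div_of_tendsto_div_id hlimm hlimp hbp).congr' hQN.symm

theorem stmt_16 (lp lm μp μm r : ℝ)
    (hlp : lp < 0) (hlm : lm < 0) (hμp : 0 < μp) (hμm : 0 < μm) (hr : 0 < r)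
    (tp tm Φp Φm Q : ℝ → ℝ)
    (htp : ∀ ρ, tp ρ = (1 / μp) * (Real.arctan (μp * ρ / (lp * ρ - 1)) + π))
    (htm : ∀ ρ, tm ρ = (1 / μm) * (-Real.arctan (μm * ρ / (lm * ρ - 1)) + π))
    (hΦp : ∀ ρ, Φp ρ = (lp - (lp ^ 2 + μp ^ 2) * ρ) / μp)
    (hΦm : ∀ ρ, Φm ρ = (lm - (lm ^ 2 + μm ^ 2) * ρ) / μm)
    (hQ : ∀ ρ, Q ρ =
      |Real.cos (μm * tm ρ) - Φm ρ * Real.sin (μm * tm ρ)| /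
        |Real.cos (μp * tp ρ) + Φp ρ * Real.sin (μp * tp ρ)| ^ r) :
    (1 < r → Filter.Tendsto Q Filter.atTop (nhds 0)) ∧
    (r < 1 → Filter.Tendsto Q Filter.atTop Filter.atTop) ∧
    (r = 1 → Filter.Tendsto Q Filter.atTop
      (nhds (Real.sqrt ((lm ^ 2 + μm ^ 2) / (lp ^ 2 + μp ^ 2))))) :=
  stmt_16_general lp lm μp μm r hμp hμm tp tm Φp Φm Q htp htm hΦp hΦm hQ
end

section
/- Let X : ℝ² → ℝ² be the vector field X(x, y) = (−x + xy, −y) and L : ℝ² → ℝ the function L(x, y) = ln(1 + x²) + y². Then: (i) L(0, 0) = 0 and L(x, y) > 0 for all (x, y) ≠ (0, 0); (ii) L is proper, i.e., L(x, y) → +∞ as ‖(x, y)‖ → +∞; and (iii) the derivative of L along X satisfies ∇L(x, y) · X(x, y) = 2x²(−1 + y)/(1 + x²) − 2y² < 0 for all (x, y) ≠ (0, 0). -/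
/-!
Both summands of `L = log (1 + x²) + y²` are nonnegative and vanish only at `x = 0`, resp. `y = 0`.
Since `1 + x² + y² ≤ (1 + x²)(1 + y²)` and `log (1 + t) ≤ t`, `L` dominates `log (1 + ‖p‖²)`,
which is proper. Along `X` the orbital derivative equals `-2(x²(y² - y + 1) + y²)/(1 + x²)`,
and `y² - y + 1` has no real root.
-/

open Real Filter

noncomputable def lyap (p : ℝ × ℝ) : ℝ := log (1 + p.1 ^ 2) + p.2 ^ 2

lemma Prod.fst_ne_zero_or_snd_ne_zero {α β : Type*} [Zero α] [Zero β] {p : α × β} (hp : p ≠ 0) :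
    p.1 ≠ 0 ∨ p.2 ≠ 0 := by
  by_contra! h
  exact hp (Prod.ext h.1 h.2)

lemma Real.log_one_add_sq_nonneg (x : ℝ) : 0 ≤ log (1 + x ^ 2) :=
  log_nonneg (by nlinarith [sq_nonneg x])

lemma Real.log_one_add_sq_pos {x : ℝ} (hx : x ≠ 0) : 0 < log (1 + x ^ 2) :=
  log_pos (by linarith [sq_pos_of_ne_zero hx])

lemma Real.log_one_add_le_self {t : ℝ} (ht : 0 ≤ t) : log (1 + t) ≤ t := by
  linarith [log_le_sub_one_of_pos (show 0 < 1 + t by linarith)]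

lemma Real.log_one_add_add_le {a b : ℝ} (ha : 0 ≤ a) (hb : 0 ≤ b) :
    log (1 + (a + b)) ≤ log (1 + a) + log (1 + b) := by
  rw [← log_mul (by positivity) (by positivity)]
  exact log_le_log (by positivity) (by nlinarith [mul_nonneg ha hb])

lemma Prod.norm_sq_le_sq_add_sq (p : ℝ × ℝ) : ‖p‖ ^ 2 ≤ p.1 ^ 2 + p.2 ^ 2 := by
  rw [Prod.norm_def, Real.norm_eq_abs, Real.norm_eq_abs]
  rcases max_cases |p.1| |p.2| with ⟨h, -⟩ | ⟨h, -⟩ <;> rw [h, sq_abs] <;>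
    nlinarith [sq_nonneg p.1, sq_nonneg p.2]

lemma tendsto_log_one_add_norm_sq {E : Type*} [Norm E] :
    Tendsto (fun p : E => log (1 + ‖p‖ ^ 2)) (comap norm atTop) atTop :=
  tendsto_log_atTop.comp <| tendsto_atTop_add_const_left _ 1 <|
    (tendsto_pow_atTop two_ne_zero).comp tendsto_comap

lemma lyap_zero : lyap 0 = 0 := by
  simp [lyap]

lemma lyap_pos {p : ℝ × ℝ} (hp : p ≠ 0) : 0 < lyap p := by
  unfold lyap
  rcases Prod.fst_ne_zero_or_snd_ne_zero hp with h | h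
  · linarith [log_one_add_sq_pos h, sq_nonneg p.2]
  · linarith [log_one_add_sq_nonneg p.1, sq_pos_of_ne_zero h]

lemma log_one_add_norm_sq_le_lyap (p : ℝ × ℝ) : log (1 + ‖p‖ ^ 2) ≤ lyap p :=
  calc log (1 + ‖p‖ ^ 2)
      ≤ log (1 + (p.1 ^ 2 + p.2 ^ 2)) :=
        log_le_log (by positivity) (by linarith [p.norm_sq_le_sq_add_sq])
    _ ≤ log (1 + p.1 ^ 2) + log (1 + p.2 ^ 2) := log_one_add_add_le (sq_nonneg _) (sq_nonneg _)
    _ ≤ log (1 + p.1 ^ 2) + p.2 ^ 2 := by gcongr; exact log_one_add_le_self (sq_nonneg _)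

lemma tendsto_lyap : Tendsto lyap (comap norm atTop) atTop :=
  tendsto_atTop_mono log_one_add_norm_sq_le_lyap tendsto_log_one_add_norm_sq

lemma hasFDerivAt_lyap (p : ℝ × ℝ) :
    HasFDerivAt lyap ((2 * p.1 / (1 + p.1 ^ 2)) • ContinuousLinearMap.fst ℝ ℝ ℝ +
      (2 * p.2) • ContinuousLinearMap.snd ℝ ℝ ℝ) p := by
  have hlog : HasDerivAt (fun t : ℝ => log (1 + t ^ 2)) (2 * p.1 / (1 + p.1 ^ 2)) p.1 := by
    simpa using ((hasDerivAt_pow 2 p.1).const_add 1).log (by positivity)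
  have hsq : HasDerivAt (fun t : ℝ => t ^ 2) (2 * p.2) p.2 := by
    simpa using hasDerivAt_pow 2 p.2
  exact (hlog.comp_hasFDerivAt p hasFDerivAt_fst).add (hsq.comp_hasFDerivAt p hasFDerivAt_snd)

lemma fderiv_lyap_apply (p v : ℝ × ℝ) :
    fderiv ℝ lyap p v = 2 * p.1 / (1 + p.1 ^ 2) * v.1 + 2 * p.2 * v.2 := by
  simp [(hasFDerivAt_lyap p).fderiv]

lemma orbital_deriv_neg {x y : ℝ} (h : x ≠ 0 ∨ y ≠ 0) :
    2 * x ^ 2 * (-1 + y) / (1 + x ^ 2) - 2 * y ^ 2 < 0 := by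
  have hrw : 2 * x ^ 2 * (-1 + y) / (1 + x ^ 2) - 2 * y ^ 2 =
      -(2 * (x ^ 2 * (y ^ 2 - y + 1) + y ^ 2) / (1 + x ^ 2)) := by
    field_simp
    ring
  have hquad : 0 < y ^ 2 - y + 1 := by nlinarith [sq_nonneg (2 * y - 1)]
  have hnum : 0 < x ^ 2 * (y ^ 2 - y + 1) + y ^ 2 := by
    rcases h with hx | hy
    · have := sq_pos_of_ne_zero hx
      positivity
    · have := sq_pos_of_ne_zero hy
      positivity
  rw [hrw, neg_lt_zero]
  positivity

theorem stmt_18 (X : ℝ × ℝ → ℝ × ℝ) (L : ℝ × ℝ → ℝ)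
    (hX : ∀ p : ℝ × ℝ, X p = (-p.1 + p.1 * p.2, -p.2))
    (hL : ∀ p : ℝ × ℝ, L p = Real.log (1 + p.1 ^ 2) + p.2 ^ 2) :
    L (0, 0) = 0 ∧ (∀ p : ℝ × ℝ, p ≠ (0, 0) → 0 < L p) ∧
      Filter.Tendsto L (Filter.comap norm Filter.atTop) Filter.atTop ∧
      (∀ p : ℝ × ℝ, p ≠ (0, 0) →
        fderiv ℝ L p (X p) = 2 * p.1 ^ 2 * (-1 + p.2) / (1 + p.1 ^ 2) - 2 * p.2 ^ 2 ∧
          fderiv ℝ L p (X p) < 0) := by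
  obtain rfl : L = lyap := funext hL
  refine ⟨lyap_zero, fun p hp => lyap_pos hp, tendsto_lyap, fun p hp => ?_⟩
  have hderiv : fderiv ℝ lyap p (X p) =
      2 * p.1 ^ 2 * (-1 + p.2) / (1 + p.1 ^ 2) - 2 * p.2 ^ 2 := by
    rw [fderiv_lyap_apply, hX]
    ring
  exact ⟨hderiv, hderiv ▸ orbital_deriv_neg (Prod.fst_ne_zero_or_snd_ne_zero hp)⟩
end
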